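/- If $F \in \mathbb{C}[X_0, X_1]_d$ is nonzero and the span of $\{F, X_1 \partial F/\partial X_0, X_1 \partial F/\partial X_1\}$ has dimension at most $2$, then $F = \alpha X_1^r L^{d-r}$ for some $r \ge 0$, scalar $\alpha \ne 0$, and linear form $L$. -/

import Mathlib

open Module MvPolynomial

lemma coeff_pderiv' {σ : Type*} [DecidableEq σ] {R : Type*} [CommSemiring R]
    (i : σ) (p : MvPolynomial σ R) (u : σ →₀ ℕ) :
    coeff u (pderiv i p) = (u i + 1) * coeff (u + Finsupp.single i 1) p := by
  induction p using MvPolynomial.induction_on' with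
  | add p q hp hq => simp [coeff_add, hp, hq, mul_add]
  | monomial s a =>
    rw [pderiv_monomial, coeff_monomial, coeff_monomial]
    by_cases h : s = u + Finsupp.single i 1
    · subst h
      rw [if_pos (add_tsub_cancel_right _ _), if_pos rfl]
      simp [mul_comm]
    · rw [if_neg h, mul_zero]
      by_cases h2 : s - Finsupp.single i 1 = u
      · rw [if_pos h2]
        by_cases h3 : s i = 0
        · simp [h3]
        · exfalso
          apply h
          rw [← h2, tsub_add_cancel_of_le]
          rw [Finsupp.single_le_iff]
          omega
      · rw [if_neg h2]

/-- abbreviation for the exponent finsupp of `X0^k X1^l` -/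
noncomputable def ee (k l : ℕ) : Fin 2 →₀ ℕ := Finsupp.single 0 k + Finsupp.single 1 l

lemma ee_apply0 (k l : ℕ) : ee k l 0 = k := by simp [ee]
lemma ee_apply1 (k l : ℕ) : ee k l 1 = l := by simp [ee]

lemma ee_eq_iff {k l k' l' : ℕ} : ee k l = ee k' l' ↔ k = k' ∧ l = l' := by
  constructor
  · intro h
    constructor
    · have := congrArg (fun u => u 0) h; simpa [ee_apply0] using this
    · have := congrArg (fun u => u 1) h; simpa [ee_apply1] using this
  · rintro ⟨rfl, rfl⟩; rfl

lemma eq_ee (u : Fin 2 →₀ ℕ) : u = ee (u 0) (u 1) := by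
  ext j
  fin_cases j <;> simp [ee_apply0, ee_apply1]

lemma degree_eq (u : Fin 2 →₀ ℕ) : u.degree = u 0 + u 1 := by
  rw [Finsupp.degree_apply]
  rw [Finset.sum_subset (Finset.subset_univ _) (by intro x _ hx; simpa using hx)]
  simp [Fin.sum_univ_two]

lemma rep_of_homog {d : ℕ} {F : MvPolynomial (Fin 2) ℂ} (hF : F.IsHomogeneous d) :
    F = ∑ k ∈ Finset.range (d + 1), monomial (ee k (d - k)) (coeff (ee k (d - k)) F) := by
  ext u
  rw [coeff_sum]
  simp only [coeff_monomial]
  by_cases hu : u 0 + u 1 = d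
  · have hu0 : u 0 ≤ d := by omega
    have hue : u = ee (u 0) (d - u 0) := by
      ext j; fin_cases j
      · simp [ee]
      · simp [ee]; omega
    rw [Finset.sum_eq_single (u 0)]
    · rw [if_pos hue.symm, ← hue]
    · intro k hk hne
      rw [if_neg]
      intro h
      rw [hue] at h
      exact hne (ee_eq_iff.mp h).1
    · intro h
      exact absurd (Finset.mem_range.mpr (by omega)) h
  · rw [hF.coeff_eq_zero (by rw [degree_eq]; exact hu)]
    symm
    apply Finset.sum_eq_zero
    intro k hk
    rw [if_neg]
    intro h
    apply hu
    rw [← h, ee_apply0, ee_apply1]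
    have : k < d + 1 := Finset.mem_range.mp hk
    omega

lemma ee_sub_single1 {k l : ℕ} (hl : 1 ≤ l) :
    ee k l - Finsupp.single 1 1 = ee k (l - 1) := by
  ext j; fin_cases j
  · simp [ee, Finsupp.sub_apply]
  · simp [ee, Finsupp.sub_apply]

lemma ee_add_single0 (k l : ℕ) : ee k l + Finsupp.single 0 1 = ee (k + 1) l := by
  ext j; fin_cases j
  · simp [ee]
  · simp [ee]

lemma ee_add_single1 (k l : ℕ) : ee k l + Finsupp.single 1 1 = ee k (l + 1) := by
  ext j; fin_cases j
  · simp [ee]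
  · simp [ee]

lemma mem_support_ee {k l : ℕ} (hl : 1 ≤ l) : (1 : Fin 2) ∈ (ee k l).support := by
  rw [Finsupp.mem_support_iff, ee_apply1]; omega

lemma coeff_X1_pd0 (F : MvPolynomial (Fin 2) ℂ) {k l : ℕ} (hl : 1 ≤ l) :
    coeff (ee k l) (X 1 * pderiv 0 F) = (k + 1) * coeff (ee (k + 1) (l - 1)) F := by
  rw [coeff_X_mul', if_pos (mem_support_ee hl), ee_sub_single1 hl, coeff_pderiv',
    ee_apply0, ee_add_single0]

lemma coeff_X1_pd1 (F : MvPolynomial (Fin 2) ℂ) {k l : ℕ} (hl : 1 ≤ l) :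
    coeff (ee k l) (X 1 * pderiv 1 F) = l * coeff (ee k l) F := by
  rw [coeff_X_mul', if_pos (mem_support_ee hl), ee_sub_single1 hl, coeff_pderiv',
    ee_apply1, ee_add_single1]
  have h1 : l - 1 + 1 = l := by omega
  rw [h1]
  congr 1
  rw [← h1]
  push_cast
  ring

lemma coeff_X1_mul_zero (p : MvPolynomial (Fin 2) ℂ) (k : ℕ) :
    coeff (ee k 0) (X 1 * p) = 0 := by
  rw [coeff_X_mul', if_neg]
  rw [Finsupp.mem_support_iff, ee_apply1]
  simp

lemma ee_monomial (a : ℂ) (k l : ℕ) :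
    monomial (ee k l) a = C a * X 0 ^ k * X 1 ^ l := by
  rw [C_mul_X_pow_eq_monomial, X_pow_eq_monomial, monomial_mul, mul_one, ee]

lemma expand_pow (d s0 : ℕ) (hs : s0 ≤ d) (t : ℂ) :
    (X 1 : MvPolynomial (Fin 2) ℂ) ^ (d - s0) * (C t * X 0 + X 1) ^ s0
      = ∑ k ∈ Finset.range (s0 + 1),
          monomial (ee k (d - k)) ((s0.choose k : ℂ) * t ^ k) := by
  rw [add_pow, Finset.mul_sum]
  apply Finset.sum_congr rfl
  intro k hk
  have hk' : k ≤ s0 := by have := Finset.mem_range.mp hk; omega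
  rw [ee_monomial, mul_pow, ← C_pow]
  have hd : d - k = (s0 - k) + (d - s0) := by omega
  rw [hd, pow_add]
  have hcast : ((s0.choose k : ℕ) : MvPolynomial (Fin 2) ℂ)
      = C ((s0.choose k : ℕ) : ℂ) := by
    push_cast
    simp
  rw [hcast, C_mul]
  ring

/-- If `F` is a nonzero binary form of degree `d` and the span of
`{F, X₁·∂F/∂X₀, X₁·∂F/∂X₁}` has dimension at most `2`, then
`F = α X₁^r L^{d-r}` for some `r ≥ 0`, scalar `α ≠ 0` and linear form `L`. -/
theorem statement9 (d : ℕ) (F : MvPolynomial (Fin 2) ℂ)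
    (hF : F.IsHomogeneous d) (hF0 : F ≠ 0)
    (hspan : finrank ℂ (Submodule.span ℂ
      ({F, X 1 * pderiv 0 F, X 1 * pderiv 1 F} : Set (MvPolynomial (Fin 2) ℂ))) ≤ 2) :
    ∃ (r : ℕ) (α : ℂ) (L : MvPolynomial (Fin 2) ℂ),
      r ≤ d ∧ α ≠ 0 ∧ L.IsHomogeneous 1 ∧ F = α • ((X 1) ^ r * L ^ (d - r)) := by
  set G : MvPolynomial (Fin 2) ℂ := X 1 * pderiv 0 F with hG
  set H : MvPolynomial (Fin 2) ℂ := X 1 * pderiv 1 F with hH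
  -- linear dependence
  have hrange : Set.range ![F, G, H] = ({F, G, H} : Set (MvPolynomial (Fin 2) ℂ)) := by
    simp only [Matrix.range_cons, Matrix.range_empty, Set.union_empty]
    ext x
    simp only [Set.mem_insert_iff, Set.mem_singleton_iff, Set.mem_union]
  have hnli : ¬ LinearIndependent ℂ ![F, G, H] := by
    intro hli
    have := finrank_span_eq_card hli
    rw [hrange] at this
    rw [this] at hspan
    simp at hspan
  obtain ⟨g, hg0, i0, hgi0⟩ := Fintype.not_linearIndependent_iff.mp hnli
  set a := g 0 with ha
  set b := g 1 with hb
  set c := g 2 with hc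
  have habc : ¬ (a = 0 ∧ b = 0 ∧ c = 0) := by
    rintro ⟨h1, h2, h3⟩
    fin_cases i0 <;> simp_all
  have hrel : a • F + b • G + c • H = 0 := by
    rw [← hg0, Fin.sum_univ_three]
    simp [ha, hb, hc]
  set f : ℕ → ℂ := fun k => coeff (ee k (d - k)) F with hf
  have hfc : ∀ k, coeff (ee k (d - k)) F = f k := fun k => rfl
  -- the coefficient recurrence
  have hR1 : ∀ k, k < d →
      a * f k + b * (((k : ℂ) + 1) * f (k + 1)) + c * (((d - k : ℕ) : ℂ) * f k) = 0 := by
    intro k hk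
    have h1 : coeff (ee k (d - k)) (a • F + b • G + c • H) = 0 := by rw [hrel]; simp
    rw [coeff_add, coeff_add, coeff_smul, coeff_smul, coeff_smul, hG, hH,
      coeff_X1_pd0 F (show 1 ≤ d - k by omega),
      coeff_X1_pd1 F (show 1 ≤ d - k by omega)] at h1
    have h2 : d - k - 1 = d - (k + 1) := by omega
    rw [h2, hfc, hfc] at h1
    simpa [smul_eq_mul] using h1
  have hR2 : a * f d = 0 := by
    have h1 : coeff (ee d 0) (a • F + b • G + c • H) = 0 := by rw [hrel]; simp
    rw [coeff_add, coeff_add, coeff_smul, coeff_smul, coeff_smul, hG, hH,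
      coeff_X1_mul_zero, coeff_X1_mul_zero] at h1
    have h3 : coeff (ee d 0) F = f d := by
      have h4 := hfc d
      rwa [Nat.sub_self] at h4
    rw [h3] at h1
    simpa [smul_eq_mul] using h1
  have hfhigh : ∀ k, d < k → f k = 0 := by
    intro k hk
    rw [← hfc]
    apply hF.coeff_eq_zero
    rw [degree_eq, ee_apply0, ee_apply1]
    omega
  have hex : ∃ k, k ≤ d ∧ f k ≠ 0 := by
    by_contra hcon
    push_neg at hcon
    apply hF0
    rw [rep_of_homog hF]
    apply Finset.sum_eq_zero
    intro k hk
    rw [hfc k, hcon k (by have := Finset.mem_range.mp hk; omega), map_zero]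
  by_cases hbz : b = 0
  · by_cases hcz : c = 0
    · exfalso
      have haz : a ≠ 0 := by tauto
      obtain ⟨k, hk, hfk⟩ := hex
      rcases Nat.lt_or_ge k d with h | h
      · have h1 := hR1 k h
        rw [hbz, hcz] at h1
        simp only [zero_mul, add_zero] at h1
        exact hfk (by rcases mul_eq_zero.mp h1 with h2 | h2 <;> tauto)
      · have hkd : k = d := by omega
        rw [hkd] at hfk
        rcases mul_eq_zero.mp hR2 with h2 | h2 <;> tauto
    · -- monomial case
      obtain ⟨k0, hk0, hfk0⟩ := hex
      have hkey : ∀ k, k ≤ d → (a + c * ((d - k : ℕ) : ℂ)) * f k = 0 := by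
        intro k hk
        rcases Nat.lt_or_ge k d with h | h
        · have h1 := hR1 k h
          rw [hbz] at h1
          linear_combination h1
        · have hkd : k = d := by omega
          subst hkd
          rw [Nat.sub_self]
          push_cast
          linear_combination hR2
      have ha' : a + c * ((d - k0 : ℕ) : ℂ) = 0 := by
        rcases mul_eq_zero.mp (hkey k0 hk0) with h | h
        · exact h
        · exact absurd h hfk0
      have huniq : ∀ k, k ≤ d → k ≠ k0 → f k = 0 := by
        intro k hk hne
        rcases mul_eq_zero.mp (hkey k hk) with h | h
        · exfalso
          have h3 : c * (((d - k : ℕ) : ℂ) - ((d - k0 : ℕ) : ℂ)) = 0 := by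
            linear_combination h - ha'
          rcases mul_eq_zero.mp h3 with h4 | h4
          · exact hcz h4
          · have h5 : ((d - k : ℕ) : ℂ) = ((d - k0 : ℕ) : ℂ) := by linear_combination h4
            have h6 : d - k = d - k0 := Nat.cast_inj.mp h5
            omega
        · exact h
      have hFeq : F = monomial (ee k0 (d - k0)) (f k0) := by
        conv_lhs => rw [rep_of_homog hF]
        rw [Finset.sum_eq_single k0
          (fun k hk hne => by
            rw [hfc k, huniq k (by have := Finset.mem_range.mp hk; omega) hne, map_zero])
          (fun h => absurd (Finset.mem_range.mpr (by omega)) h)]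
        try rw [hfc]
        try rfl
      refine ⟨d - k0, f k0, X 0, by omega, hfk0, isHomogeneous_X _ _, ?_⟩
      have hdd : d - (d - k0) = k0 := by omega
      rw [hdd, hFeq, ee_monomial, smul_eq_C_mul]
      ring
  · -- b ≠ 0 : power-of-linear-form case
    have hSne : ((Finset.range (d + 1)).filter (fun k => f k ≠ 0)).Nonempty := by
      obtain ⟨k, hk, hfk⟩ := hex
      exact ⟨k, Finset.mem_filter.mpr ⟨Finset.mem_range.mpr (by omega), hfk⟩⟩
    set s0 := ((Finset.range (d + 1)).filter (fun k => f k ≠ 0)).max' hSne with hs0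
    have hs0mem := Finset.max'_mem _ hSne
    rw [← hs0] at hs0mem
    have hs0d : s0 ≤ d := by
      have := Finset.mem_range.mp (Finset.mem_filter.mp hs0mem).1
      omega
    have hfs0 : f s0 ≠ 0 := (Finset.mem_filter.mp hs0mem).2
    have hzero : ∀ k, s0 < k → f k = 0 := by
      intro k hk
      rcases Nat.lt_or_ge d k with h | h
      · exact hfhigh k h
      · by_contra hne
        have hmem : k ∈ (Finset.range (d + 1)).filter (fun k => f k ≠ 0) :=
          Finset.mem_filter.mpr ⟨Finset.mem_range.mpr (by omega), hne⟩
        have := Finset.le_max' _ k hmem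
        omega
    have ha' : a + c * ((d - s0 : ℕ) : ℂ) = 0 := by
      rcases Nat.lt_or_ge s0 d with h | h
      · have h1 := hR1 s0 h
        rw [hzero (s0 + 1) (by omega)] at h1
        have h2 : (a + c * ((d - s0 : ℕ) : ℂ)) * f s0 = 0 := by linear_combination h1
        rcases mul_eq_zero.mp h2 with h3 | h3
        · exact h3
        · exact absurd h3 hfs0
      · have hsd : s0 = d := by omega
        have h0 : ((d - s0 : ℕ) : ℂ) = 0 := by rw [show d - s0 = 0 by omega]; simp
        rw [h0, mul_zero, add_zero]
        have hfd : f d ≠ 0 := by rw [show d = s0 by omega]; exact hfs0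
        rcases mul_eq_zero.mp hR2 with h2 | h2
        · exact h2
        · exact absurd h2 hfd
    set t := -c / b with ht
    have hbt : b * t = -c := by rw [ht]; field_simp
    have hstep : ∀ k, k < s0 →
        b * (((k : ℂ) + 1) * f (k + 1)) = -c * ((s0 - k : ℕ) : ℂ) * f k := by
      intro k hk
      have h1 := hR1 k (by omega)
      have hsk : ((d - k : ℕ) : ℂ) = ((d - s0 : ℕ) : ℂ) + ((s0 - k : ℕ) : ℂ) := by
        rw [show d - k = (d - s0) + (s0 - k) by omega]
        push_cast
        ring
      linear_combination h1 - f k * ha' - c * f k * hsk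
    have hclosed : ∀ k, k ≤ s0 → f k = f 0 * (s0.choose k : ℂ) * t ^ k := by
      intro k
      induction k with
      | zero => intro _; simp
      | succ n ih =>
        intro hk
        have hn : n < s0 := by omega
        have h1 := hstep n hn
        rw [ih (by omega)] at h1
        have hb1 : b * ((n : ℂ) + 1) ≠ 0 :=
          mul_ne_zero hbz (Nat.cast_add_one_ne_zero n)
        apply mul_left_cancel₀ hb1
        have hch : ((n : ℂ) + 1) * (s0.choose (n + 1) : ℂ)
            = (s0.choose n : ℂ) * ((s0 - n : ℕ) : ℂ) := by
          have h2 := Nat.choose_succ_right_eq s0 n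
          have h3 : ((s0.choose (n + 1) : ℂ)) * ((n : ℂ) + 1)
              = (s0.choose n : ℂ) * ((s0 - n : ℕ) : ℂ) := by exact_mod_cast h2
          linear_combination h3
        push_cast
        linear_combination h1 - f 0 * t ^ n * (((n : ℂ) + 1) * (s0.choose (n + 1) : ℂ)) * hbt
          + c * f 0 * t ^ n * hch
    have hα : f 0 ≠ 0 := by
      intro h0
      apply hfs0
      rw [hclosed s0 le_rfl, h0, zero_mul, zero_mul]
    refine ⟨d - s0, f 0, C t * X 0 + X 1, by omega, hα, ?_, ?_⟩
    · have h1 : (C t * X 0 : MvPolynomial (Fin 2) ℂ).IsHomogeneous 1 := by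
        have := (isHomogeneous_C (Fin 2) t).mul (isHomogeneous_X ℂ (0 : Fin 2))
        simpa using this
      exact h1.add (isHomogeneous_X _ _)
    · have hdd : d - (d - s0) = s0 := by omega
      rw [hdd]
      have hsum : F = ∑ k ∈ Finset.range (s0 + 1),
          monomial (ee k (d - k)) (coeff (ee k (d - k)) F) := by
        conv_lhs => rw [rep_of_homog hF]
        symm
        apply Finset.sum_subset (Finset.range_subset_range.mpr (by omega))
        intro k hk hknot
        have h1 : f k = 0 := by
          apply hzero
          have := Finset.mem_range.mp hk
          simp only [Finset.mem_range] at hknot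
          omega
        rw [hfc k, h1, map_zero]
      rw [hsum, expand_pow d s0 hs0d t, Finset.smul_sum]
      apply Finset.sum_congr rfl
      intro k hk
      have hk' : k ≤ s0 := by have := Finset.mem_range.mp hk; omega
      rw [hfc k, hclosed k hk', smul_monomial, smul_eq_mul, mul_assoc]
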